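/- arXiv:0903.1595 — 12 statements merged into one kernel-verified Lean document; each statement's English description precedes it below -/
import Mathlib

section
/- For every θ ∈ ℝ, both roots of the quadratic polynomial f(z) = z^2 + (1/2)e^{-iθ} z + (1/2)e^{-iθ} lie in the closed unit disk. -/
/-! With `a = e^{-iθ}/2`, so that `‖a‖ = 1/2`, a root satisfies `z² = -a (z + 1)`, hence
`‖z‖² ≤ (‖z‖ + 1) / 2`, which forces `‖z‖ ≤ 1`. -/

theorem norm_sq_le_norm_mul_norm_add_one_of_sq_add_mul_add_eq_zero {𝕜 : Type*} [NormedField 𝕜]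
    {a z : 𝕜} (h : z ^ 2 + a * z + a = 0) : ‖z‖ ^ 2 ≤ ‖a‖ * (‖z‖ + 1) := by
  have hsq : z ^ 2 = -a * (z + 1) := by linear_combination h
  calc ‖z‖ ^ 2 = ‖a‖ * ‖z + 1‖ := by rw [← norm_pow, hsq, norm_mul, norm_neg]
    _ ≤ ‖a‖ * (‖z‖ + 1) := by gcongr; simpa using norm_add_le z 1

theorem norm_le_one_of_sq_add_mul_add_eq_zero {𝕜 : Type*} [NormedField 𝕜] {a z : 𝕜}
    (ha : ‖a‖ ≤ 1 / 2) (h : z ^ 2 + a * z + a = 0) : ‖z‖ ≤ 1 := by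
  have hz := norm_sq_le_norm_mul_norm_add_one_of_sq_add_mul_add_eq_zero h
  nlinarith [norm_nonneg z, mul_le_mul_of_nonneg_right ha (by positivity : (0 : ℝ) ≤ ‖z‖ + 1)]

/-- Both roots of `z² + (1/2)e^{-iθ} z + (1/2)e^{-iθ}` lie in the closed unit disk. -/
theorem roots_in_closed_disk (θ : ℝ) (z : ℂ)
    (hz : z ^ 2 + (1 / 2) * Complex.exp (-(θ : ℂ) * Complex.I) * z
        + (1 / 2) * Complex.exp (-(θ : ℂ) * Complex.I) = 0) :
    ‖z‖ ≤ 1 := by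
  refine norm_le_one_of_sq_add_mul_add_eq_zero (le_of_eq ?_) hz
  rw [norm_mul, ← Complex.ofReal_neg, Complex.norm_exp_ofReal_mul_I]
  norm_num
end

section
/- For every a ∈ (-1,1), both roots of the quadratic polynomial f(z) = z^2 + ((1+3a)/2) z + (1+a)/2 lie in the open unit disk. -/
/-!
This is the Schur–Cohn criterion for a real monic quadratic `z² + b z + c`: if `c < 1` and
`|b| < 1 + c`, both roots lie in the open unit disk. A non-real root `x + iy` forces `2x + b = 0`
(imaginary part), and then the real part reads `x² + y² = c < 1`. A real root `x` cannot satisfy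
`|x| ≥ 1`, since the quadratic is positive at `±1` and its vertex `-b/2` lies in `(-1, 1)`.
For `b = (1+3a)/2`, `c = (1+a)/2` the two conditions amount to `-1 < a < 1`.
-/

namespace Complex

theorem normSq_eq_of_quadratic_root_of_im_ne_zero {b c : ℝ} {z : ℂ}
    (hz : z ^ 2 + b * z + c = 0) (him : z.im ≠ 0) : normSq z = c := by
  have hre : z.re ^ 2 - z.im ^ 2 + b * z.re + c = 0 := by
    simpa [sq] using congrArg re hz
  have him' : z.im * (2 * z.re + b) = 0 := by
    have := congrArg im hz
    simp only [sq, add_im, mul_im, ofReal_re, ofReal_im, zero_im] at this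
    linear_combination this
  have hb : b = -2 * z.re := by
    linear_combination (mul_eq_zero.mp him').resolve_left him
  rw [normSq_apply]
  linear_combination (-1 : ℝ) * hre + z.re * hb

end Complex

theorem abs_lt_one_of_quadratic_root {b c x : ℝ} (hc : c < 1) (hb : |b| < 1 + c)
    (hx : x ^ 2 + b * x + c = 0) : |x| < 1 := by
  rw [abs_lt] at hb ⊢
  constructor <;> nlinarith

theorem Complex.norm_lt_one_of_quadratic_root {b c : ℝ} (hc : c < 1) (hb : |b| < 1 + c) {z : ℂ}
    (hz : z ^ 2 + b * z + c = 0) : ‖z‖ < 1 := by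
  by_cases him : z.im = 0
  · have hzre : z = z.re := ext rfl (by simpa using him)
    rw [hzre] at hz ⊢
    rw [norm_real, Real.norm_eq_abs]
    exact abs_lt_one_of_quadratic_root hc hb (by exact_mod_cast hz)
  · rw [← sq_lt_one_iff₀ (norm_nonneg z), ← normSq_eq_norm_sq,
      normSq_eq_of_quadratic_root_of_im_ne_zero hz him]
    exact hc

/-- For `a ∈ (-1,1)`, both roots of `z² + ((1+3a)/2) z + (1+a)/2` lie in the open unit disk. -/
theorem roots_in_open_disk (a : ℝ) (ha₁ : -1 < a) (ha₂ : a < 1) (z : ℂ)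
    (hz : z ^ 2 + ((1 + 3 * (a : ℂ)) / 2) * z + (1 + (a : ℂ)) / 2 = 0) :
    ‖z‖ < 1 := by
  refine Complex.norm_lt_one_of_quadratic_root (b := (1 + 3 * a) / 2) (c := (1 + a) / 2)
    (by linarith) (abs_lt.mpr ⟨by linarith, by linarith⟩) ?_
  push_cast
  exact hz
end

section
/- Let f(z) = a_0 + a_1 z + ... + a_n z^n be a complex polynomial of degree n with |a_0| < |a_n|, and let f*(z) = conj(a_n) + conj(a_{n-1}) z + ... + conj(a_0) z^n. Then f_1(z) = (conj(a_n) f(z) - a_0 f*(z))/z is a polynomial of degree n-1, and the number of zeros of f_1 (counted with multiplicity) inside the open unit disk equals the number of zeros of f inside the open unit disk minus one. -/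
/-!
Factor `f = s * h`, where `s = ∏ (X - w)` runs over the zeros `w` of `f` on the unit circle. Such
an `s` is self-inversive, `s* = u s` with `|u| = 1`, so `z f₁ = s (conj aₙ h - a₀ u h*)`. On the
circle `|h*| = |h| ≠ 0`, hence `|a₀ u h*| < |aₙ h|`, and Rouché's theorem gives
`conj aₙ h - a₀ u h*` as many zeros in the disk as `h`. The common factor `s` contributes equally
to both sides, and the zero of `z f₁` at the origin accounts for the shift by one.

Rouché's theorem for polynomials follows from the argument principle: on the circle,
`log ((p - q) / p)` is defined (its argument has positive real part) and is a primitive of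
`(p - q)' / (p - q) - p' / p`, whose circle integral therefore vanishes.
-/

open Polynomial Metric Complex
open scoped ComplexConjugate Real

namespace Polynomial

variable {R : Type*}

theorem reverse_one [Semiring R] : (1 : R[X]).reverse = 1 := by
  simpa using reverse_C (1 : R)

theorem reverse_X [Semiring R] : (X : R[X]).reverse = 1 := by
  rw [← mul_one X, reverse_X_mul, reverse_one]

theorem reverse_X_sub_C [Ring R] [Nontrivial R] (c : R) : (X - C c).reverse = 1 - C c * X := by
  rw [sub_eq_neg_add, ← C_neg, reverse_C_add, reverse_X, natDegree_X, pow_one, C_neg, neg_mul,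
    neg_add_eq_sub]

end Polynomial

noncomputable def numRootsInDisk (p : ℂ[X]) : ℕ :=
  Multiset.card (p.roots.filter fun z => ‖z‖ < 1)

lemma numRootsInDisk_mul {p q : ℂ[X]} (hpq : p * q ≠ 0) :
    numRootsInDisk (p * q) = numRootsInDisk p + numRootsInDisk q := by
  simp only [numRootsInDisk, roots_mul hpq, Multiset.filter_add, Multiset.card_add]

lemma numRootsInDisk_C_mul {a : ℂ} (ha : a ≠ 0) (p : ℂ[X]) :
    numRootsInDisk (C a * p) = numRootsInDisk p := by
  rw [numRootsInDisk, roots_C_mul _ ha, numRootsInDisk]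

lemma numRootsInDisk_eq_numRootsInDisk_divX_add_one {p : ℂ[X]} (hp : p ≠ 0)
    (h0 : p.coeff 0 = 0) : numRootsInDisk p = numRootsInDisk p.divX + 1 := by
  have hX : X * p.divX = p := by simpa [h0] using X_mul_divX_add p
  conv_lhs => rw [← hX]
  rw [numRootsInDisk_mul (by rwa [hX]), add_comm]
  simp [numRootsInDisk, Multiset.filter_singleton]

lemma circleIntegral_inv_sub_of_norm_ne_one {r : ℂ} (hr : ‖r‖ ≠ 1) :
    (∮ z in C(0, 1), (z - r)⁻¹) = if ‖r‖ < 1 then 2 * π * I else 0 := by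
  split_ifs with h
  · exact circleIntegral.integral_sub_inv_of_mem_ball (by simpa using h)
  · refine DiffContOnCl.circleIntegral_eq_zero zero_le_one (DifferentiableOn.diffContOnCl ?_)
    rw [closure_ball 0 one_ne_zero]
    intro z hz
    refine ((differentiableAt_id.sub_const r).inv (sub_ne_zero.2 ?_)).differentiableWithinAt
    rintro rfl
    exact hr (le_antisymm (by simpa using hz) (not_lt.1 h))

lemma circleIntegral_sum_inv_sub (S : Multiset ℂ) (hS : ∀ r ∈ S, ‖r‖ ≠ 1) :
    CircleIntegrable (fun z => (S.map fun r => (z - r)⁻¹).sum) 0 1 ∧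
      (∮ z in C(0, 1), (S.map fun r => (z - r)⁻¹).sum) =
        2 * π * I * Multiset.card (S.filter fun r => ‖r‖ < 1) := by
  induction S using Multiset.induction_on with
  | empty => simp [CircleIntegrable, circleIntegral]
  | cons r S ih =>
    obtain ⟨hint, hval⟩ := ih fun s hs => hS s (Multiset.mem_cons_of_mem hs)
    have hr := hS r (Multiset.mem_cons_self r S)
    have hint_r : CircleIntegrable (fun z => (z - r)⁻¹) 0 1 :=
      circleIntegrable_sub_inv_iff.2 (Or.inr (by simpa using hr))
    simp only [Multiset.map_cons, Multiset.sum_cons]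
    refine ⟨hint_r.add hint, ?_⟩
    rw [circleIntegral.integral_add hint_r hint, hval, circleIntegral_inv_sub_of_norm_ne_one hr,
      Multiset.filter_cons]
    split_ifs
    · rw [Multiset.card_add, Multiset.card_singleton]
      push_cast
      ring
    · rw [zero_add, zero_add]

lemma circleIntegrable_derivative_div {p : ℂ[X]} (hp : ∀ z, ‖z‖ = 1 → p.eval z ≠ 0) :
    CircleIntegrable (fun z => p.derivative.eval z / p.eval z) 0 1 :=
  ContinuousOn.circleIntegrable zero_le_one <|
    p.derivative.continuousOn.div p.continuousOn fun z hz => hp z (by simpa using hz)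

theorem circleIntegral_derivative_div {p : ℂ[X]} (hp : ∀ z, ‖z‖ = 1 → p.eval z ≠ 0) :
    (∮ z in C(0, 1), p.derivative.eval z / p.eval z) = 2 * π * I * numRootsInDisk p := by
  have hroots : ∀ r ∈ p.roots, ‖r‖ ≠ 1 := fun r hr h1 => hp r h1 (isRoot_of_mem_roots hr)
  rw [circleIntegral.integral_congr zero_le_one
    (g := fun z => (p.roots.map fun r => (z - r)⁻¹).sum)]
  · exact (circleIntegral_sum_inv_sub _ hroots).2
  · intro z hz
    simp only [(IsAlgClosed.splits p).eval_derivative_div_eval_of_ne_zero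
      (hp z (by simpa using hz)), one_div]

lemma eval_sub_ne_zero_of_norm_lt {p q : ℂ[X]} {z : ℂ} (h : ‖q.eval z‖ < ‖p.eval z‖) :
    (p - q).eval z ≠ 0 := by
  rw [eval_sub, sub_ne_zero]
  exact fun hpq => h.ne (by rw [hpq])

theorem numRootsInDisk_sub {p q : ℂ[X]} (h : ∀ z, ‖z‖ = 1 → ‖q.eval z‖ < ‖p.eval z‖) :
    numRootsInDisk (p - q) = numRootsInDisk p := by
  have hp : ∀ z, ‖z‖ = 1 → p.eval z ≠ 0 := fun z hz =>
    norm_pos_iff.1 ((norm_nonneg _).trans_lt (h z hz))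
  have hpq : ∀ z, ‖z‖ = 1 → (p - q).eval z ≠ 0 := fun z hz =>
    eval_sub_ne_zero_of_norm_lt (h z hz)
  have hprim : ∀ z ∈ sphere (0 : ℂ) 1,
      HasDerivWithinAt (fun w => log ((p - q).eval w / p.eval w))
        ((p - q).derivative.eval z / (p - q).eval z - p.derivative.eval z / p.eval z)
        (sphere 0 1) z := by
    intro z hz
    rw [mem_sphere_zero_iff_norm] at hz
    have hpz := hp z hz
    have hslit : (p - q).eval z / p.eval z ∈ slitPlane := by
      have hsplit : (p - q).eval z / p.eval z = 1 + -(q.eval z / p.eval z) := by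
        rw [eval_sub]
        field_simp
        ring
      rw [hsplit]
      apply mem_slitPlane_of_norm_lt_one
      rw [norm_neg, norm_div, div_lt_one (norm_pos_iff.2 hpz)]
      exact h z hz
    have hquot := ((p - q).hasDerivAt z).div (p.hasDerivAt z) hpz
    refine ((hquot.clog hslit).congr_deriv ?_).hasDerivWithinAt
    have hpqz := hpq z hz
    simp only [Pi.div_apply]
    generalize (p - q).eval z = a at hpqz ⊢
    field_simp
  have hzero := circleIntegral.integral_eq_zero_of_hasDerivWithinAt zero_le_one hprim
  rw [circleIntegral.integral_sub (circleIntegrable_derivative_div hpq)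
      (circleIntegrable_derivative_div hp), circleIntegral_derivative_div hpq,
    circleIntegral_derivative_div hp, ← mul_sub, mul_eq_zero, sub_eq_zero] at hzero
  exact_mod_cast hzero.resolve_left (by simp [Real.pi_ne_zero, I_ne_zero])

noncomputable def conjReverse (p : ℂ[X]) : ℂ[X] := (p.map (starRingEnd ℂ)).reverse

lemma conjReverse_mul (p q : ℂ[X]) : conjReverse (p * q) = conjReverse p * conjReverse q := by
  simp only [conjReverse, Polynomial.map_mul, reverse_mul_of_domain]

lemma conjReverse_X_sub_C {w : ℂ} (hw : ‖w‖ = 1) :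
    conjReverse (X - C w) = C (-conj w) * (X - C w) := by
  rw [conjReverse, Polynomial.map_sub, map_X, map_C, reverse_X_sub_C, ← inv_eq_conj hw, map_neg,
    neg_mul, mul_sub, ← C_mul, inv_mul_cancel₀ (by simp [← norm_ne_zero_iff, hw]), C_1]
  ring

lemma conjReverse_prod_X_sub_C {S : Multiset ℂ} (hS : ∀ w ∈ S, ‖w‖ = 1) :
    ∃ u : ℂ, ‖u‖ = 1 ∧
      conjReverse (S.map fun w => X - C w).prod = C u * (S.map fun w => X - C w).prod := by
  induction S using Multiset.induction_on with
  | empty => exact ⟨1, by simp [conjReverse, reverse_one]⟩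
  | cons w S ih =>
    obtain ⟨u, hu, hS'⟩ := ih fun s hs => hS s (Multiset.mem_cons_of_mem hs)
    have hw := hS w (Multiset.mem_cons_self w S)
    refine ⟨-conj w * u, by simp [hw, hu], ?_⟩
    simp only [Multiset.map_cons, Multiset.prod_cons, conjReverse_mul, conjReverse_X_sub_C hw, hS',
      C_mul]
    ring

lemma norm_eval_conjReverse (p : ℂ[X]) {z : ℂ} (hz : ‖z‖ = 1) :
    ‖(conjReverse p).eval z‖ = ‖p.eval z‖ := by
  have hz0 : conj z ≠ 0 := by simp [← norm_ne_zero_iff, hz]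
  let := invertibleOfNonzero hz0
  have h := eval₂_reverse_mul_pow (RingHom.id ℂ) (conj z) (p.map (starRingEnd ℂ))
  rw [invOf_eq_inv, ← map_inv₀, inv_eq_conj hz, conj_conj, eval₂_id, eval₂_id, eval_map,
    eval₂_at_apply] at h
  simpa [conjReverse, hz] using congrArg norm h

lemma coeff_conjReverse_zero (p : ℂ[X]) : (conjReverse p).coeff 0 = conj p.leadingCoeff := by
  rw [conjReverse, coeff_zero_reverse, leadingCoeff_map_of_injective (RingHom.injective _)]

lemma coeff_conjReverse_natDegree (p : ℂ[X]) :
    (conjReverse p).coeff p.natDegree = conj (p.coeff 0) := by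
  rw [conjReverse, coeff_reverse, natDegree_map_eq_of_injective (RingHom.injective _),
    revAt_le le_rfl, Nat.sub_self, coeff_map]

lemma natDegree_conjReverse_le (p : ℂ[X]) : (conjReverse p).natDegree ≤ p.natDegree :=
  (reverse_natDegree_le _).trans natDegree_map_le

lemma exists_eq_prod_X_sub_C_mul_of_ne_zero {f : ℂ[X]} (hf : f ≠ 0) :
    ∃ S : Multiset ℂ, ∃ h : ℂ[X], (∀ w ∈ S, ‖w‖ = 1) ∧ (∀ z, ‖z‖ = 1 → h.eval z ≠ 0) ∧
      f = (S.map fun w => X - C w).prod * h := by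
  refine ⟨f.roots.filter (‖·‖ = 1), C f.leadingCoeff *
    ((f.roots.filter (¬‖·‖ = 1)).map fun w => X - C w).prod,
    fun w hw => (Multiset.mem_filter.1 hw).2, fun z hz h0 => ?_, ?_⟩
  · rw [eval_mul, eval_C, eval_multiset_prod, mul_eq_zero, Multiset.prod_eq_zero_iff] at h0
    simp only [leadingCoeff_eq_zero, hf, false_or, Multiset.map_map, Function.comp_def, eval_sub,
      eval_X, eval_C, Multiset.mem_map, Multiset.mem_filter, sub_eq_zero] at h0
    obtain ⟨w, ⟨-, hw⟩, rfl⟩ := h0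
    exact hw hz
  · rw [mul_left_comm, ← Multiset.prod_add, ← Multiset.map_add, Multiset.filter_add_not,
      C_leadingCoeff_mul_prod_multiset_X_sub_C (splits_iff_card_roots.1 (IsAlgClosed.splits f))]

theorem numRootsInDisk_C_mul_sub_C_mul_conjReverse {a b : ℂ} (hab : ‖b‖ < ‖a‖) (f : ℂ[X]) :
    numRootsInDisk (C a * f - C b * conjReverse f) = numRootsInDisk f := by
  rcases eq_or_ne f 0 with rfl | hf
  · simp [conjReverse]
  obtain ⟨S, h, hS, hh, rfl⟩ := exists_eq_prod_X_sub_C_mul_of_ne_zero hf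
  obtain ⟨u, hu, hSu⟩ := conjReverse_prod_X_sub_C hS
  set s := (S.map fun w => X - C w).prod
  have ha : a ≠ 0 := norm_pos_iff.1 ((norm_nonneg b).trans_lt hab)
  have hdom : ∀ z, ‖z‖ = 1 → ‖(C (b * u) * conjReverse h).eval z‖ < ‖(C a * h).eval z‖ := by
    intro z hz
    rw [eval_mul, eval_mul, eval_C, eval_C, norm_mul, norm_mul, norm_mul, hu, mul_one,
      norm_eval_conjReverse h hz]
    exact mul_lt_mul_of_pos_right hab (norm_pos_iff.2 (hh z hz))
  have hfactor : C a * (s * h) - C b * conjReverse (s * h) =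
      s * (C a * h - C (b * u) * conjReverse h) := by
    rw [conjReverse_mul, hSu, C_mul]
    ring
  have hs : s ≠ 0 := (monic_multiset_prod_of_monic _ _ fun w _ => monic_X_sub_C w).ne_zero
  have hne : C a * h - C (b * u) * conjReverse h ≠ 0 := fun h0 =>
    eval_sub_ne_zero_of_norm_lt (hdom 1 norm_one) (by rw [h0, eval_zero])
  have hh0 : h ≠ 0 := fun h0 => hh 1 norm_one (by rw [h0, eval_zero])
  rw [hfactor, numRootsInDisk_mul (mul_ne_zero hs hne), numRootsInDisk_mul (mul_ne_zero hs hh0),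
    numRootsInDisk_sub hdom, numRootsInDisk_C_mul ha]

/-- The polynomial `z f₁(z)` of Cohn's rule. -/
noncomputable def schurCohn (f : ℂ[X]) : ℂ[X] :=
  C (conj f.leadingCoeff) * f - C (f.coeff 0) * conjReverse f

lemma coeff_schurCohn_zero (f : ℂ[X]) : (schurCohn f).coeff 0 = 0 := by
  rw [schurCohn, coeff_sub, coeff_C_mul, coeff_C_mul, coeff_conjReverse_zero]
  ring

lemma coeff_schurCohn_natDegree (f : ℂ[X]) :
    (schurCohn f).coeff f.natDegree = ((‖f.leadingCoeff‖ ^ 2 - ‖f.coeff 0‖ ^ 2 : ℝ) : ℂ) := by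
  rw [schurCohn, coeff_sub, coeff_C_mul, coeff_C_mul, coeff_conjReverse_natDegree,
    coeff_natDegree, conj_mul', mul_conj']
  push_cast
  ring

lemma coeff_schurCohn_natDegree_ne_zero {f : ℂ[X]} (h : ‖f.coeff 0‖ < ‖f.leadingCoeff‖) :
    (schurCohn f).coeff f.natDegree ≠ 0 := by
  rw [coeff_schurCohn_natDegree]
  exact_mod_cast (sub_pos.2 (pow_lt_pow_left₀ h (norm_nonneg _) two_ne_zero)).ne'

lemma natDegree_schurCohn {f : ℂ[X]} (h : ‖f.coeff 0‖ < ‖f.leadingCoeff‖) :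
    (schurCohn f).natDegree = f.natDegree :=
  le_antisymm ((natDegree_sub_le _ _).trans (max_le (natDegree_C_mul_le _ _)
      ((natDegree_C_mul_le _ _).trans (natDegree_conjReverse_le f))))
    (le_natDegree_of_ne_zero (coeff_schurCohn_natDegree_ne_zero h))

theorem numRootsInDisk_schurCohn {f : ℂ[X]} (h : ‖f.coeff 0‖ < ‖f.leadingCoeff‖) :
    numRootsInDisk (schurCohn f) = numRootsInDisk f :=
  numRootsInDisk_C_mul_sub_C_mul_conjReverse (by rwa [Complex.norm_conj]) f

theorem cohn_rule_general (f : Polynomial ℂ) (n : ℕ) (hdeg : f.natDegree = n)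
    (hlt : ‖f.coeff 0‖ < ‖f.coeff n‖) :
    ((Polynomial.C ((starRingEnd ℂ) (f.coeff n)) * f
        - Polynomial.C (f.coeff 0) * (f.map (starRingEnd ℂ)).reverse).divX).degree
      = ((n - 1 : ℕ) : WithBot ℕ) ∧
    Multiset.card
        (((Polynomial.C ((starRingEnd ℂ) (f.coeff n)) * f
            - Polynomial.C (f.coeff 0) * (f.map (starRingEnd ℂ)).reverse).divX).roots.filter
          (fun z => ‖z‖ < 1)) + 1
      = Multiset.card (f.roots.filter (fun z => ‖z‖ < 1)) := by
  subst hdeg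
  rw [coeff_natDegree] at hlt
  have hg : C (conj f.leadingCoeff) * f - C (f.coeff 0) * (f.map (starRingEnd ℂ)).reverse =
      schurCohn f := rfl
  have hT : schurCohn f ≠ 0 := fun h0 =>
    coeff_schurCohn_natDegree_ne_zero hlt (by rw [h0, coeff_zero])
  have hdivX : (schurCohn f).divX ≠ 0 := by
    rwa [Ne, divX_eq_zero_iff, coeff_schurCohn_zero, C_0]
  rw [coeff_natDegree, hg]
  refine ⟨?_, ?_⟩
  · rw [degree_eq_natDegree hdivX, natDegree_divX_eq_natDegree_tsub_one, natDegree_schurCohn hlt]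
  · exact (numRootsInDisk_eq_numRootsInDisk_divX_add_one hT (coeff_schurCohn_zero f)).symm.trans
      (numRootsInDisk_schurCohn hlt)

/-- Cohn's rule: if `f` has degree `n` and `|a₀| < |aₙ|`, then
`f₁(z) = (conj(aₙ) f(z) - a₀ f*(z))/z` is a polynomial of degree `n-1` having exactly one
fewer zero (counted with multiplicity) in the open unit disk than `f` does. -/
theorem cohn_rule (f : Polynomial ℂ) (n : ℕ) (hn : 0 < n) (hdeg : f.natDegree = n)
    (hlt : ‖f.coeff 0‖ < ‖f.coeff n‖) :
    ((Polynomial.C ((starRingEnd ℂ) (f.coeff n)) * f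
        - Polynomial.C (f.coeff 0) * (f.map (starRingEnd ℂ)).reverse).divX).degree
      = ((n - 1 : ℕ) : WithBot ℕ) ∧
    Multiset.card
        (((Polynomial.C ((starRingEnd ℂ) (f.coeff n)) * f
            - Polynomial.C (f.coeff 0) * (f.map (starRingEnd ℂ)).reverse).divX).roots.filter
          (fun z => ‖z‖ < 1)) + 1
      = Multiset.card (f.roots.filter (fun z => ‖z‖ < 1)) :=
  cohn_rule_general f n hdeg hlt
end

section
/- For all θ ∈ ℝ, define ω̃(z) = -z e^{2iθ}(z^2 + (1/2)e^{-iθ}z + (1/2)e^{-iθ})/(1 + (1/2)e^{iθ}z + (1/2)e^{iθ}z^2). Then |ω̃(z)| < 1 for all z in the open unit disk. -/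
open Complex

private lemma dilatation_aux (e c z w : ℂ) (h : e * c = 1) :
    (1 + (1/2)*e*z + (1/2)*e*z^2) * (1 + (1/2)*c*w + (1/2)*c*w^2)
      - (z*w) * ((z^2 + (1/2)*c*z + (1/2)*c) * (w^2 + (1/2)*e*w + (1/2)*e))
    = (1 - z*w) * ((1 + z*w + (z*w)^2) + ((e*z + c*w)/2) * (1 + z*w)
        + (e*z^2 + c*w^2)/2) := by
  have he : e ≠ 0 := left_ne_zero_of_mul_eq_one h
  have hc : c = e⁻¹ := by field_simp; linear_combination h
  subst hc
  field_simp
  ring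

/-- The dilatation `ω̃(z) = -z e^{2iθ}(z² + (1/2)e^{-iθ}z + (1/2)e^{-iθ})/(1 + (1/2)e^{iθ}z + (1/2)e^{iθ}z²)`
satisfies `|ω̃(z)| < 1` on the open unit disk. -/
theorem dilatation_lt_one (θ : ℝ) (z : ℂ) (hz : ‖z‖ < 1) :
    ‖-z * Complex.exp (2 * (θ : ℂ) * Complex.I)
        * (z ^ 2 + (1 / 2) * Complex.exp (-(θ : ℂ) * Complex.I) * z
            + (1 / 2) * Complex.exp (-(θ : ℂ) * Complex.I))
        / (1 + (1 / 2) * Complex.exp ((θ : ℂ) * Complex.I) * z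
            + (1 / 2) * Complex.exp ((θ : ℂ) * Complex.I) * z ^ 2)‖ < 1 := by
  have hinv : Complex.exp (-(θ : ℂ) * Complex.I)
      = (Complex.exp ((θ : ℂ) * Complex.I))⁻¹ := by
    rw [← Complex.exp_neg]; ring_nf
  have h2 : Complex.exp (2 * (θ : ℂ) * Complex.I)
      = Complex.exp ((θ : ℂ) * Complex.I) * Complex.exp ((θ : ℂ) * Complex.I) := by
    rw [← Complex.exp_add]; ring_nf
  rw [hinv, h2]
  set e := Complex.exp ((θ : ℂ) * Complex.I) with he
  have hne : e ≠ 0 := Complex.exp_ne_zero _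
  have hnorm : ‖e‖ = 1 := Complex.norm_exp_ofReal_mul_I θ
  have hce : (starRingEnd ℂ) e = e⁻¹ := by
    rw [he, ← Complex.exp_conj, ← Complex.exp_neg]
    congr 1
    simp [map_mul, Complex.conj_I, Complex.conj_ofReal]
  clear_value e
  clear he hinv h2
  -- replace e⁻¹ by an opaque c
  obtain ⟨c, hc⟩ : ∃ c, e⁻¹ = c := ⟨e⁻¹, rfl⟩
  rw [hc] at hce ⊢
  have hec : e * c = 1 := by rw [← hc]; exact mul_inv_cancel₀ hne
  obtain ⟨w, hw⟩ : ∃ w, (starRingEnd ℂ) z = w := ⟨_, rfl⟩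
  have hcc : (starRingEnd ℂ) c = e := by
    rw [← hce, Complex.conj_conj]
  set D : ℂ := 1 + (1 / 2) * e * z + (1 / 2) * e * z ^ 2 with hD
  set Ds : ℂ := z ^ 2 + (1 / 2) * c * z + (1 / 2) * c with hDs
  set r2 : ℝ := Complex.normSq z with hr2
  set r : ℝ := ‖z‖ with hr
  set u : ℝ := (e * z).re with hu
  set v : ℝ := (e * z ^ 2).re with hv
  have hrsq : r ^ 2 = r2 := by rw [hr, hr2]; exact Complex.sq_norm z
  have hr1 : r < 1 := hz
  have hrnn : 0 ≤ r := norm_nonneg z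
  have hr2lt : r2 < 1 := by nlinarith
  have hr2nn : 0 ≤ r2 := Complex.normSq_nonneg z
  have hru : |u| ≤ r := by
    calc |u| ≤ ‖e * z‖ := Complex.abs_re_le_norm _
    _ = r := by rw [norm_mul, hnorm, one_mul]
  have hrv : |v| ≤ r2 := by
    calc |v| ≤ ‖e * z ^ 2‖ := Complex.abs_re_le_norm _
    _ = r2 := by rw [norm_mul, hnorm, one_mul, norm_pow, ← hrsq, hr]
  have hconjD : (starRingEnd ℂ) D = 1 + (1 / 2) * c * w + (1 / 2) * c * w ^ 2 := by
    rw [hD]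
    simp [map_add, map_mul, map_pow, hce, hw, map_one, map_ofNat]
  have hconjDs : (starRingEnd ℂ) Ds = w ^ 2 + (1 / 2) * e * w + (1 / 2) * e := by
    rw [hDs]
    simp [map_add, map_mul, map_pow, hcc, hw, map_ofNat]
  have e1 : (Complex.normSq D : ℂ) = D * (1 + (1 / 2) * c * w + (1 / 2) * c * w ^ 2) := by
    rw [← hconjD, Complex.mul_conj]
  have e2 : (r2 : ℂ) = z * w := by rw [hr2, ← hw, Complex.mul_conj]
  have e3 : (Complex.normSq Ds : ℂ) = Ds * (w ^ 2 + (1 / 2) * e * w + (1 / 2) * e) := by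
    rw [← hconjDs, Complex.mul_conj]
  have e4 : (u : ℂ) = (e * z + c * w) / 2 := by
    have h := Complex.add_conj (e * z)
    rw [map_mul, hce, hw] at h
    rw [hu]; push_cast at h ⊢; linear_combination -h / 2
  have e5 : (v : ℂ) = (e * z ^ 2 + c * w ^ 2) / 2 := by
    have h := Complex.add_conj (e * z ^ 2)
    rw [map_mul, hce, map_pow, hw] at h
    rw [hv]; push_cast at h ⊢; linear_combination -h / 2
  clear_value D Ds r2 r u v
  have key : Complex.normSq D - r2 * Complex.normSq Ds
      = (1 - r2) * ((1 + r2 + r2 ^ 2) + u * (1 + r2) + v) := by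
    have hcx : ((Complex.normSq D - r2 * Complex.normSq Ds : ℝ) : ℂ)
        = ((1 - r2) * ((1 + r2 + r2 ^ 2) + u * (1 + r2) + v) : ℝ) := by
      push_cast
      rw [e1, e3, e2, e4, e5, hD, hDs]
      linear_combination dilatation_aux e c z w hec
    exact_mod_cast hcx
  have hE : 0 < (1 + r2 + r2 ^ 2) + u * (1 + r2) + v := by
    obtain ⟨hu1, hu2⟩ := abs_le.mp hru
    obtain ⟨hv1, hv2⟩ := abs_le.mp hrv
    nlinarith [sq_nonneg r2, sq_nonneg (r - 1), sq_nonneg (r * r)]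
  have hlt : r2 * Complex.normSq Ds < Complex.normSq D := by
    nlinarith [mul_pos (by linarith : (0:ℝ) < 1 - r2) hE]
  have hDpos : 0 < Complex.normSq D := by
    nlinarith [mul_nonneg hr2nn (Complex.normSq_nonneg Ds)]
  have hnormD : 0 < ‖D‖ := by
    exact norm_pos_iff.mpr (fun h0 => by simp [h0] at hDpos)
  have hnum : ‖-z * (e * e) * Ds‖ = r * ‖Ds‖ := by
    rw [norm_mul, norm_mul, norm_neg, norm_mul, hnorm,
      ← hr]
    ring
  have hmain : ‖-z * (e * e) * Ds‖ < ‖D‖ := by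
    rw [hnum]
    have hsq : (r * ‖Ds‖) ^ 2 < ‖D‖ ^ 2 := by
      rw [mul_pow, hrsq, Complex.sq_norm,
        Complex.sq_norm]
      exact hlt
    exact lt_of_pow_lt_pow_left₀ 2 (norm_nonneg D) hsq
  rw [norm_div, div_lt_one hnormD]
  exact hmain
end

section
/- Let n ≥ 5 be odd and z_0 = -n/(n+1). Define ω̃(z) = -z^n (z^{n+1} + (n/2 - 1)z - n/2)/(1 + (n/2 - 1)z^n - (n/2)z^{n+1}). Then |ω̃(z_0)| > 1. -/
/-!
Put `t = n/(n+1)` and `s = tⁿ`, so `z₀ = -t`. Since `n` is odd, `ω̃(z₀)` is the real quotient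
`s (s t - (n/2 - 1) t - n/2) / (1 - s ((n/2 - 1) + (n/2) t))`. The denominator exceeds the
numerator by `(1 + s)(1 - s t) > 0`, and it is negative because `s ≥ e⁻¹ > 1/3` while
`(n/2 - 1) + (n/2) t ≥ 3` for `n ≥ 5`; so the quotient is a real number greater than `1`.
-/

open Real

lemma exp_neg_one_le_div_add_one_pow (n : ℕ) : exp (-1) ≤ ((n : ℝ) / (n + 1)) ^ n := by
  rcases eq_or_ne n 0 with rfl | hn
  · simp
  have hdiv : (n : ℝ) / (n + 1) = (1 + (n : ℝ)⁻¹)⁻¹ := by field_simp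
  rw [hdiv, inv_pow, exp_neg]
  exact inv_anti₀ (by positivity) one_add_inv_pow_le_exp

lemma one_lt_abs_div_of_lt_of_neg {a b : ℝ} (hb : b < 0) (hab : a < b) : 1 < |a / b| := by
  rw [abs_of_pos (div_pos_of_neg_of_neg (hab.trans hb) hb)]
  exact (one_lt_div_of_neg hb).mpr hab

lemma one_lt_abs_dilatation_neg {n : ℕ} (hodd : Odd n) {t p q : ℝ} (hqp : q = p + 1)
    (ht0 : 0 ≤ t) (ht1 : t < 1) (hden : 1 < t ^ n * (p + q * t)) :
    1 < |-(-t) ^ n * ((-t) ^ (n + 1) + p * -t - q) / (1 + p * (-t) ^ n - q * (-t) ^ (n + 1))| := by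
  rw [hodd.neg_pow, hodd.add_one.neg_pow, pow_succ]
  apply one_lt_abs_div_of_lt_of_neg
  · linarith
  · have hst : t ^ n * t < 1 := by rw [← pow_succ]; exact pow_lt_one₀ ht0 ht1 n.succ_ne_zero
    -- denominator minus numerator is `(1 + tⁿ) (1 - tⁿ⁺¹)` once `q = p + 1`
    subst hqp
    linarith [mul_pos (by positivity : 0 < 1 + t ^ n) (sub_pos.mpr hst)]

/-- For odd `n ≥ 5` and `z₀ = -n/(n+1)`, the dilatation
`ω̃(z) = -zⁿ(z^{n+1} + (n/2-1)z - n/2)/(1 + (n/2-1)zⁿ - (n/2)z^{n+1})`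
satisfies `|ω̃(z₀)| > 1`. -/
theorem dilatation_gt_one (n : ℕ) (hn : 5 ≤ n) (hodd : Odd n) :
    1 < ‖(fun z : ℂ => -z ^ n * (z ^ (n + 1) + ((n : ℂ) / 2 - 1) * z - (n : ℂ) / 2)
        / (1 + ((n : ℂ) / 2 - 1) * z ^ n - ((n : ℂ) / 2) * z ^ (n + 1)))
      (-(n : ℂ) / ((n : ℂ) + 1))‖ := by
  set t : ℝ := n / (n + 1) with ht
  have hn5 : (5 : ℝ) ≤ n := by exact_mod_cast hn
  have ht0 : 0 ≤ t := by positivity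
  have ht1 : t < 1 := (div_lt_one (by positivity)).mpr (lt_add_one _)
  have hpow : 1 / 3 < t ^ n :=
    calc 1 / 3 < exp (-1) := lt_trans (by norm_num) exp_neg_one_gt_d9
      _ ≤ t ^ n := exp_neg_one_le_div_add_one_pow n
  have hcoef : 3 ≤ (n / 2 - 1) + n / 2 * t := by
    have : ((n : ℝ) - 1) / 2 ≤ n / 2 * t := by
      rw [ht, div_mul_div_comm, div_le_div_iff₀ (by norm_num) (by positivity)]; nlinarith
    linarith
  have hz : -(n : ℂ) / ((n : ℂ) + 1) = ((-t : ℝ) : ℂ) := by rw [ht]; push_cast; ring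
  have hq : (n : ℂ) / 2 = ((n / 2 : ℝ) : ℂ) := by push_cast; ring
  rw [hz, hq]
  beta_reduce
  norm_cast
  rw [Real.norm_eq_abs]
  exact one_lt_abs_dilatation_neg hodd (by ring) ht0 ht1 (by nlinarith)
end

section
/- Let α ∈ [π/2, π) and θ ∈ [-π, π]. Then all three roots of the cubic polynomial f(z) = z^3 + (cos α + (1/2)e^{-iθ})z^2 - (1/2)e^{-iθ} lie in the closed unit disk. -/
/-!
A root `z` satisfies `2 z² (z + c) = w (1 - z²)` with `c = cos α ∈ (-1, 0]` and `|w| = 1`.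
If `|z| = r > 1`, write `x = Re z`; then `|1 - z²|² = (r² + 1)² - 4x²` while
`4 r⁴ |z + c|² = 4 r⁴ (r² + 2cx + c²)`, and an elementary real inequality shows the latter is
strictly larger, so the two sides of the equation cannot have equal modulus.
-/

theorem sq_add_one_sq_sub_four_mul_sq_lt {r c x : ℝ} (hr : 1 < r) (hc₀ : -1 < c) (hc : c ≤ 0)
    (hx : x ≤ r) : (r ^ 2 + 1) ^ 2 - 4 * x ^ 2 < 4 * r ^ 4 * (r ^ 2 + 2 * c * x + c ^ 2) := by
  have hr2 : 1 < r ^ 2 := by nlinarith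
  have hr4 : 1 < r ^ 4 := by nlinarith
  -- The right side minus the left is a quadratic in `x` with vertex at `x = -r⁴c`; the split is
  -- on whether the vertex lies in the admissible range `x ≤ r`.
  rcases le_or_gt (c ^ 2 * r ^ 6) 1 with hsmall | hlarge
  · have h : 0 < r ^ 2 *
        (4 * r ^ 4 * (r ^ 2 + 2 * c * x + c ^ 2) - ((r ^ 2 + 1) ^ 2 - 4 * x ^ 2)) := by
      nlinarith [sq_nonneg (x + r ^ 4 * c),
        mul_nonneg (by linarith : (0:ℝ) ≤ 1 - c ^ 2 * r ^ 6) (by linarith : (0:ℝ) ≤ r ^ 4 - 1),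
        mul_pos (pow_pos (by linarith : (0:ℝ) < r ^ 2 - 1) 2)
          (by nlinarith : (0:ℝ) < 4 * r ^ 4 + 7 * r ^ 2 + 4),
        mul_nonneg (sq_nonneg (x + r ^ 4 * c)) (sq_nonneg r)]
    nlinarith
  · have hcr₀ : r ^ 3 * c ≤ 0 := by nlinarith [pow_pos (by linarith : (0:ℝ) < r) 3]
    have hcr : r ^ 3 * c < -1 := by nlinarith
    have h₁ : 0 ≤ (r - x) * (-(x + r + 2 * r ^ 4 * c)) :=
      mul_nonneg (by linarith) (by nlinarith)
    have h₂ : 0 < (2 * r ^ 2 * (r + c) - r ^ 2 + 1) * (2 * r ^ 2 * (r + c) + r ^ 2 - 1) :=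
      mul_pos (by nlinarith [sq_nonneg (r - 1)]) (by nlinarith)
    nlinarith

namespace Complex

theorem sq_norm_add_ofReal (z : ℂ) (c : ℝ) :
    ‖z + c‖ ^ 2 = ‖z‖ ^ 2 + 2 * c * z.re + c ^ 2 := by
  simp only [Complex.sq_norm, normSq_apply, add_re, add_im, ofReal_re, ofReal_im]
  ring

theorem sq_norm_one_sub_sq (z : ℂ) : ‖1 - z ^ 2‖ ^ 2 = (‖z‖ ^ 2 + 1) ^ 2 - 4 * z.re ^ 2 := by
  simp only [Complex.sq_norm, normSq_apply]
  simp only [sub_re, sub_im, one_re, one_im, pow_two, mul_re, mul_im]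
  ring

theorem norm_one_sub_sq_lt {z : ℂ} {c : ℝ} (hz : 1 < ‖z‖) (hc₀ : -1 < c) (hc : c ≤ 0) :
    ‖1 - z ^ 2‖ < 2 * ‖z‖ ^ 2 * ‖z + c‖ := by
  refine lt_of_pow_lt_pow_left₀ 2 (by positivity) ?_
  calc ‖1 - z ^ 2‖ ^ 2 = (‖z‖ ^ 2 + 1) ^ 2 - 4 * z.re ^ 2 := sq_norm_one_sub_sq z
    _ < 4 * ‖z‖ ^ 4 * (‖z‖ ^ 2 + 2 * c * z.re + c ^ 2) :=
      sq_add_one_sq_sub_four_mul_sq_lt hz hc₀ hc (re_le_norm z)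
    _ = (2 * ‖z‖ ^ 2 * ‖z + c‖) ^ 2 := by rw [mul_pow, sq_norm_add_ofReal]; ring

theorem norm_le_one_of_cubic_eq_zero {c : ℝ} {w z : ℂ} (hc₀ : -1 < c) (hc : c ≤ 0)
    (hw : ‖w‖ ≤ 1) (hz : z ^ 3 + (c + 1 / 2 * w) * z ^ 2 - 1 / 2 * w = 0) : ‖z‖ ≤ 1 := by
  by_contra! hz₁
  have hfactor : 2 * z ^ 2 * (z + c) = w * (1 - z ^ 2) := by linear_combination 2 * hz
  have hnorm : 2 * ‖z‖ ^ 2 * ‖z + c‖ = ‖w‖ * ‖1 - z ^ 2‖ := by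
    simpa [norm_mul, norm_pow] using congrArg norm hfactor
  have := norm_one_sub_sq_lt hz₁ hc₀ hc
  nlinarith [norm_nonneg (1 - z ^ 2)]

end Complex

theorem cubic_roots_in_closed_disk_general (α θ : ℝ) (hα₁ : Real.pi / 2 ≤ α) (hα₂ : α < Real.pi)
    (z : ℂ)
    (hz : z ^ 3 + ((Real.cos α : ℂ) + (1 / 2) * Complex.exp (-(θ : ℂ) * Complex.I)) * z ^ 2
        - (1 / 2) * Complex.exp (-(θ : ℂ) * Complex.I) = 0) :
    ‖z‖ ≤ 1 := by
  have hcos_nonpos : Real.cos α ≤ 0 :=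
    Real.cos_nonpos_of_pi_div_two_le_of_le hα₁ (by linarith [Real.pi_pos])
  have hcos_gt : -1 < Real.cos α := by
    simpa using Real.cos_lt_cos_of_nonneg_of_le_pi (by linarith [Real.pi_pos]) le_rfl hα₂
  have hexp : ‖Complex.exp (-(θ : ℂ) * Complex.I)‖ ≤ 1 := by
    rw [Complex.norm_exp]
    simp
  exact Complex.norm_le_one_of_cubic_eq_zero hcos_gt hcos_nonpos hexp hz

/-- For `α ∈ [π/2, π)` and `θ ∈ [-π, π]`, all three roots of
`z³ + (cos α + (1/2)e^{-iθ})z² - (1/2)e^{-iθ}` lie in the closed unit disk. -/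
theorem cubic_roots_in_closed_disk (α θ : ℝ) (hα₁ : Real.pi / 2 ≤ α) (hα₂ : α < Real.pi)
    (hθ₁ : -Real.pi ≤ θ) (hθ₂ : θ ≤ Real.pi) (z : ℂ)
    (hz : z ^ 3 + ((Real.cos α : ℂ) + (1 / 2) * Complex.exp (-(θ : ℂ) * Complex.I)) * z ^ 2
        - (1 / 2) * Complex.exp (-(θ : ℂ) * Complex.I) = 0) :
    ‖z‖ ≤ 1 :=
  cubic_roots_in_closed_disk_general α θ hα₁ hα₂ z hz
end

section
/- For θ ∈ ℝ and x ∈ (-1,0], writing y = cos θ, one has (1/2 - (1/4)x^2 - (1/4)xy)^2 - |-(1/4)x + (1/2)e^{-iθ}x^2 - (3/8)e^{-iθ} + (1/8)e^{iθ}|^2 = (3/16)(1 - x^2)(x - y)^2 ≥ 0; in particular |-(1/4)x + (1/2)e^{-iθ}x^2 - (3/8)e^{-iθ} + (1/8)e^{iθ}|^2 ≤ (1/2 - (1/4)x^2 - (1/4)xy)^2. -/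
/-- For `θ ∈ ℝ`, `x ∈ (-1,0]`, with `y = cos θ`:
`(1/2 - x²/4 - xy/4)² - |-(1/4)x + (1/2)e^{-iθ}x² - (3/8)e^{-iθ} + (1/8)e^{iθ}|²
  = (3/16)(1-x²)(x-y)² ≥ 0`. -/
theorem key_real_identity (θ x : ℝ) (hx₁ : -1 < x) (hx₂ : x ≤ 0) :
    (1 / 2 - (1 / 4) * x ^ 2 - (1 / 4) * x * Real.cos θ) ^ 2
        - ‖-(1 / 4) * (x : ℂ) + (1 / 2) * Complex.exp (-(θ : ℂ) * Complex.I) * (x : ℂ) ^ 2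
            - (3 / 8) * Complex.exp (-(θ : ℂ) * Complex.I)
            + (1 / 8) * Complex.exp ((θ : ℂ) * Complex.I)‖ ^ 2
      = (3 / 16) * (1 - x ^ 2) * (x - Real.cos θ) ^ 2 ∧
    (3 / 16) * (1 - x ^ 2) * (x - Real.cos θ) ^ 2 ≥ 0 := by
  constructor
  · have hs : Real.sin θ ^ 2 + Real.cos θ ^ 2 = 1 := Real.sin_sq_add_cos_sq θ
    have hz : -(1 / 4) * (x : ℂ) + (1 / 2) * Complex.exp (-(θ : ℂ) * Complex.I) * (x : ℂ) ^ 2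
            - (3 / 8) * Complex.exp (-(θ : ℂ) * Complex.I)
            + (1 / 8) * Complex.exp ((θ : ℂ) * Complex.I)
        = ((-(x/4) + Real.cos θ * x^2/2 - Real.cos θ/4 : ℝ) : ℂ)
          + ((Real.sin θ/2 - Real.sin θ * x^2/2 : ℝ) : ℂ) * Complex.I := by
      have h1 : (-(θ : ℂ)) * Complex.I = (↑(-θ) : ℂ) * Complex.I := by push_cast; ring
      rw [h1, Complex.exp_mul_I, Complex.exp_mul_I, ← Complex.ofReal_cos, ← Complex.ofReal_sin,
        ← Complex.ofReal_cos, ← Complex.ofReal_sin, Real.cos_neg, Real.sin_neg]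
      push_cast
      ring
    rw [hz, Complex.sq_norm, Complex.normSq_add_mul_I]
    linear_combination (-(1 - x^2)^2/4) * hs
  · have h2 : 0 ≤ 1 - x^2 := by nlinarith
    have := sq_nonneg (x - Real.cos θ)
    nlinarith
end

section
/- Let ω(z) = (z + a)/(1 + a z) with a ∈ (-1,1), and let h be analytic on the unit disk with h(z) + g(z) = z/(1-z) where g' = ω h'. Then the dilatation ω̃ of f_0 * (h + conj(g)), given by ω̃(z) = -z(ω(z)^2 + ω(z) - (1/2)ω'(z)z + (1/2)ω'(z))/(1 + ω(z) - (1/2)ω'(z)z + (1/2)ω'(z)z^2), simplifies to ω̃(z) = -z(z^2 + ((1+3a)/2)z + (1+a)/2)/(1 + ((1+3a)/2)z + ((1+a)/2)z^2), and |ω̃(z)| < 1 for all z in the open unit disk. -/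
/-!
Writing `u = 1 + a z`, the Möbius map gives `ω(z) u = z + a` and `ω'(z) u² = 1 - a²`, so
numerator and denominator of `ω̃` are both `(1 + a) / u²` times the quadratics
`P(z) = z² + b z + c` and `Q(z) = 1 + b z + c z²` with `b = (1 + 3a)/2`, `c = (1 + a)/2`.
Since `Q` is the reversal of `P`,
`|Q|² - |P|² = (1 - |z|²)(1 - c)((1 + c)(1 + |z|²) + 2 b Re z)`, which is positive on the disk
as soon as `|c| < 1` and `|b| ≤ 1 + c`; hence `|ω̃| ≤ |z| |P/Q| < 1`.
-/

open Complex

theorem hasDerivAt_mobius {𝕜 : Type*} [NontriviallyNormedField 𝕜] {a z : 𝕜}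
    (hz : 1 + a * z ≠ 0) :
    HasDerivAt (fun w => (w + a) / (1 + a * w)) ((1 - a ^ 2) / (1 + a * z) ^ 2) z := by
  have hnum : HasDerivAt (fun w => w + a) 1 z := (hasDerivAt_id z).add_const a
  have hden : HasDerivAt (fun w => 1 + a * w) a z := by
    simpa using ((hasDerivAt_id z).const_mul a).const_add 1
  exact (hnum.fun_div hden hz).congr_deriv (by ring)

section Field

variable {K : Type*} [Field K] [CharZero K] {a z w w' : K}

theorem dilatation_numerator_mul_sq (hw : w * (1 + a * z) = z + a)
    (hw' : w' * (1 + a * z) ^ 2 = 1 - a ^ 2) :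
    (w ^ 2 + (w - 1 / 2 * w' * z) + 1 / 2 * w') * (1 + a * z) ^ 2
      = (1 + a) * (z ^ 2 + (1 + 3 * a) / 2 * z + (1 + a) / 2) := by
  linear_combination (w * (1 + a * z) + z + a + (1 + a * z)) * hw + (1 - z) / 2 * hw'

theorem dilatation_denominator_mul_sq (hw : w * (1 + a * z) = z + a)
    (hw' : w' * (1 + a * z) ^ 2 = 1 - a ^ 2) :
    (1 + (w - 1 / 2 * w' * z) + 1 / 2 * w' * z ^ 2) * (1 + a * z) ^ 2
      = (1 + a) * (1 + (1 + 3 * a) / 2 * z + (1 + a) / 2 * z ^ 2) := by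
  linear_combination (1 + a * z) * hw + (z ^ 2 - z) / 2 * hw'

theorem dilatation_eq_of_mobius (ha : 1 + a ≠ 0) (hu : 1 + a * z ≠ 0)
    (hw : w * (1 + a * z) = z + a) (hw' : w' * (1 + a * z) ^ 2 = 1 - a ^ 2) :
    -z * (w ^ 2 + (w - 1 / 2 * w' * z) + 1 / 2 * w')
        / (1 + (w - 1 / 2 * w' * z) + 1 / 2 * w' * z ^ 2)
      = -z * (z ^ 2 + (1 + 3 * a) / 2 * z + (1 + a) / 2)
          / (1 + (1 + 3 * a) / 2 * z + (1 + a) / 2 * z ^ 2) := by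
  rw [mul_div_assoc, mul_div_assoc, ← mul_div_mul_right _ _ (pow_ne_zero 2 hu),
    dilatation_numerator_mul_sq hw hw', dilatation_denominator_mul_sq hw hw',
    mul_div_mul_left _ _ ha]

end Field

theorem normSq_reverse_sub_normSq_quadratic (b c : ℝ) (z : ℂ) :
    normSq (1 + b * z + c * z ^ 2) - normSq (z ^ 2 + b * z + c)
      = (1 - normSq z) * (1 - c) * ((1 + c) * (1 + normSq z) + 2 * b * z.re) := by
  simp only [normSq_apply, add_re, add_im, mul_re, mul_im, pow_two, one_re, one_im,
    ofReal_re, ofReal_im]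
  ring

theorem norm_quadratic_lt_norm_reverse {b c : ℝ} (hc : |c| < 1) (hb : |b| ≤ 1 + c) {z : ℂ}
    (hz : ‖z‖ < 1) : ‖z ^ 2 + b * z + c‖ < ‖1 + b * z + c * z ^ 2‖ := by
  obtain ⟨hc₁, hc₂⟩ := abs_lt.mp hc
  have hr : normSq z < 1 := by
    rw [normSq_eq_norm_sq]; nlinarith [norm_nonneg z]
  have hx : |z.re| < 1 := (abs_re_le_norm z).trans_lt hz
  have hre : 2 * |z.re| < 1 + normSq z := by
    rw [normSq_apply]
    nlinarith [sq_abs z.re, mul_self_nonneg z.im, abs_nonneg z.re]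
  have hbx : -(2 * b * z.re) ≤ (1 + c) * (2 * |z.re|) := by
    nlinarith [neg_abs_le (b * z.re), abs_mul b z.re,
      mul_le_mul_of_nonneg_right hb (abs_nonneg z.re)]
  have hpos : 0 < (1 - normSq z) * (1 - c) * ((1 + c) * (1 + normSq z) + 2 * b * z.re) := by
    have : (1 + c) * (2 * |z.re|) < (1 + c) * (1 + normSq z) :=
      mul_lt_mul_of_pos_left hre (by linarith)
    exact mul_pos (mul_pos (sub_pos.mpr hr) (sub_pos.mpr hc₂)) (by linarith)
  apply lt_of_pow_lt_pow_left₀ 2 (norm_nonneg _)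
  rw [Complex.sq_norm, Complex.sq_norm]
  linarith [normSq_reverse_sub_normSq_quadratic b c z]

/-- For `ω(z) = (z+a)/(1+az)` with `a ∈ (-1,1)`, the dilatation
`ω̃(z) = -z(ω² + (ω - (1/2)ω'z) + (1/2)ω')/(1 + (ω - (1/2)ω'z) + (1/2)ω'z²)` simplifies to
`-z(z² + ((1+3a)/2)z + (1+a)/2)/(1 + ((1+3a)/2)z + ((1+a)/2)z²)` and has modulus `< 1`
on the open unit disk. -/
theorem dilatation_mobius (a : ℝ) (ha₁ : -1 < a) (ha₂ : a < 1) (ω : ℂ → ℂ)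
    (hω : ∀ w : ℂ, ω w = (w + (a : ℂ)) / (1 + (a : ℂ) * w)) :
    ∀ z ∈ Metric.ball (0 : ℂ) 1,
      -z * ((ω z) ^ 2 + (ω z - (1 / 2) * deriv ω z * z) + (1 / 2) * deriv ω z)
          / (1 + (ω z - (1 / 2) * deriv ω z * z) + (1 / 2) * deriv ω z * z ^ 2)
        = -z * (z ^ 2 + ((1 + 3 * (a : ℂ)) / 2) * z + (1 + (a : ℂ)) / 2)
          / (1 + ((1 + 3 * (a : ℂ)) / 2) * z + ((1 + (a : ℂ)) / 2) * z ^ 2) ∧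
      ‖-z * ((ω z) ^ 2 + (ω z - (1 / 2) * deriv ω z * z) + (1 / 2) * deriv ω z)
          / (1 + (ω z - (1 / 2) * deriv ω z * z) + (1 / 2) * deriv ω z * z ^ 2)‖ < 1 := by
  intro z hz
  rw [Metric.mem_ball, dist_zero_right] at hz
  have ha : |a| < 1 := abs_lt.mpr ⟨ha₁, ha₂⟩
  have hu : 1 + (a : ℂ) * z ≠ 0 := by
    intro h
    have : ‖(a : ℂ) * z‖ < 1 := by
      rw [norm_mul, norm_real, Real.norm_eq_abs]
      nlinarith [abs_nonneg a, norm_nonneg z]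
    rw [eq_neg_of_add_eq_zero_right h, norm_neg, norm_one] at this
    exact this.false
  have hw : ω z * (1 + a * z) = z + a := by rw [hω, div_mul_cancel₀ _ hu]
  have hw' : deriv ω z * (1 + a * z) ^ 2 = 1 - a ^ 2 := by
    rw [funext hω, (hasDerivAt_mobius hu).deriv, div_mul_cancel₀ _ (pow_ne_zero 2 hu)]
  have ha' : 1 + (a : ℂ) ≠ 0 := by exact_mod_cast (show 1 + a ≠ 0 by linarith)
  have hsimp := dilatation_eq_of_mobius ha' hu hw hw'
  have hPQ := norm_quadratic_lt_norm_reverse (b := (1 + 3 * a) / 2) (c := (1 + a) / 2)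
    (by rw [abs_lt]; constructor <;> linarith) (by rw [abs_le]; constructor <;> linarith) hz
  push_cast at hPQ
  refine ⟨hsimp, ?_⟩
  rw [hsimp, norm_div, norm_mul, norm_neg, div_lt_one ((norm_nonneg _).trans_lt hPQ)]
  exact (mul_le_of_le_one_left (norm_nonneg _) hz.le).trans_lt hPQ
end

section
/- For a ∈ (-1,1) and all z in the open unit disk, |z| · |z^2 + ((1+3a)/2)z + (1+a)/2| < |1 + ((1+3a)/2)z + ((1+a)/2)z^2|. -/
open Complex

/-- Blaschke factor inequality. -/
lemma blaschke_lt (r z : ℂ) (hr : ‖r‖ < 1) (hz : ‖z‖ < 1) :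
    ‖z - r‖ < ‖1 - (starRingEnd ℂ) r * z‖ := by
  have key : Complex.normSq (1 - (starRingEnd ℂ) r * z) - Complex.normSq (z - r)
      = (1 - Complex.normSq r) * (1 - Complex.normSq z) := by
    simp only [Complex.normSq_apply, Complex.sub_re, Complex.sub_im, Complex.mul_re,
      Complex.mul_im, Complex.one_re, Complex.one_im, Complex.conj_re, Complex.conj_im]
    ring
  have hr2 : Complex.normSq r < 1 := by
    have := Complex.sq_norm r
    nlinarith [norm_nonneg r]
  have hz2 : Complex.normSq z < 1 := by
    have := Complex.sq_norm z
    nlinarith [norm_nonneg z]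
  have hpos : 0 < (1 - Complex.normSq r) * (1 - Complex.normSq z) := by
    apply mul_pos <;> linarith
  have h1 := Complex.sq_norm (z - r)
  have h2 := Complex.sq_norm (1 - (starRingEnd ℂ) r * z)
  refine lt_of_pow_lt_pow_left₀ 2 (norm_nonneg _) ?_
  rw [h1, h2]; linarith

lemma main_aux (c d : ℝ) (r₁ r₂ : ℂ) (h1 : ‖r₁‖ < 1) (h2 : ‖r₂‖ < 1)
    (hsum : r₁ + r₂ = -(c : ℂ)) (hprod : r₁ * r₂ = (d : ℂ)) (z : ℂ) (hz : ‖z‖ < 1) :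
    ‖z‖ * ‖z ^ 2 + (c : ℂ) * z + (d : ℂ)‖ < ‖1 + (c : ℂ) * z + (d : ℂ) * z ^ 2‖ := by
  have hs' : (starRingEnd ℂ) r₁ + (starRingEnd ℂ) r₂ = -(c : ℂ) := by
    rw [← map_add, hsum]; simp
  have hp' : (starRingEnd ℂ) r₁ * (starRingEnd ℂ) r₂ = (d : ℂ) := by
    rw [← map_mul, hprod]; simp
  have e1 : z ^ 2 + (c : ℂ) * z + (d : ℂ) = (z - r₁) * (z - r₂) := by
    linear_combination z * hsum - hprod
  have e2 : 1 + (c : ℂ) * z + (d : ℂ) * z ^ 2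
      = (1 - (starRingEnd ℂ) r₁ * z) * (1 - (starRingEnd ℂ) r₂ * z) := by
    linear_combination z * hs' - z ^ 2 * hp'
  rw [e1, e2, norm_mul, norm_mul]
  have b1 := blaschke_lt r₁ z h1 hz
  have b2 := blaschke_lt r₂ z h2 hz
  have inner : ‖z - r₁‖ * ‖z - r₂‖
      < ‖1 - (starRingEnd ℂ) r₁ * z‖ * ‖1 - (starRingEnd ℂ) r₂ * z‖ :=
    mul_lt_mul'' b1 b2 (norm_nonneg _) (norm_nonneg _)
  calc ‖z‖ * (‖z - r₁‖ * ‖z - r₂‖)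
      < 1 * (‖1 - (starRingEnd ℂ) r₁ * z‖ * ‖1 - (starRingEnd ℂ) r₂ * z‖) :=
        mul_lt_mul'' hz inner (norm_nonneg _) (mul_nonneg (norm_nonneg _) (norm_nonneg _))
    _ = _ := one_mul _

/-- For `a ∈ (-1,1)` and `|z| < 1`:
`|z|·|z² + ((1+3a)/2)z + (1+a)/2| < |1 + ((1+3a)/2)z + ((1+a)/2)z²|`. -/
theorem key_inequality_mobius (a : ℝ) (ha₁ : -1 < a) (ha₂ : a < 1) (z : ℂ) (hz : ‖z‖ < 1) :
    ‖z‖ * ‖z ^ 2 + ((1 + 3 * (a : ℂ)) / 2) * z + (1 + (a : ℂ)) / 2‖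
      < ‖1 + ((1 + 3 * (a : ℂ)) / 2) * z + ((1 + (a : ℂ)) / 2) * z ^ 2‖ := by
  set c : ℝ := (1 + 3 * a) / 2 with hc
  set d : ℝ := (1 + a) / 2 with hd
  have hc' : (1 + 3 * (a : ℂ)) / 2 = (c : ℂ) := by rw [hc]; push_cast; ring
  have hd' : (1 + (a : ℂ)) / 2 = (d : ℂ) := by rw [hd]; push_cast; ring
  rw [hc', hd']
  by_cases hD : 0 ≤ c ^ 2 - 4 * d
  · -- real roots
    set e : ℝ := Real.sqrt (c ^ 2 - 4 * d) with he
    have he2 : e ^ 2 = c ^ 2 - 4 * d := Real.sq_sqrt hD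
    have he0 : 0 ≤ e := Real.sqrt_nonneg _
    have hbc : e < 2 + c := by nlinarith
    have hbc2 : e < 2 - c := by nlinarith
    have h1 : ‖(((-c + e) / 2 : ℝ) : ℂ)‖ < 1 := by
      rw [Complex.norm_real, Real.norm_eq_abs, abs_lt]
      constructor <;> nlinarith
    have h2 : ‖(((-c - e) / 2 : ℝ) : ℂ)‖ < 1 := by
      rw [Complex.norm_real, Real.norm_eq_abs, abs_lt]
      constructor <;> nlinarith
    have hsum : (((-c + e) / 2 : ℝ) : ℂ) + (((-c - e) / 2 : ℝ) : ℂ) = -(c : ℂ) := by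
      push_cast; ring
    have hprod : (((-c + e) / 2 : ℝ) : ℂ) * (((-c - e) / 2 : ℝ) : ℂ) = (d : ℂ) := by
      have : ((-c + e) / 2) * ((-c - e) / 2) = d := by nlinarith
      push_cast [← this]; ring
    exact main_aux c d _ _ h1 h2 hsum hprod z hz
  · -- complex conjugate roots
    push_neg at hD
    set e : ℝ := Real.sqrt (d - c ^ 2 / 4) with he
    have he2 : e ^ 2 = d - c ^ 2 / 4 := Real.sq_sqrt (by linarith)
    have hd1 : d < 1 := by rw [hd]; linarith
    set r₁ : ℂ := (↑(-c / 2) + ↑e * Complex.I) with hr₁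
    set r₂ : ℂ := (↑(-c / 2) - ↑e * Complex.I) with hr₂
    have hnsq : ∀ r : ℂ, r = r₁ ∨ r = r₂ → Complex.normSq r = d := by
      rintro r (rfl | rfl) <;>
      · simp only [hr₁, hr₂, Complex.normSq_apply, Complex.add_re, Complex.add_im,
          Complex.sub_re, Complex.sub_im, Complex.ofReal_re, Complex.ofReal_im,
          Complex.mul_re, Complex.mul_im, Complex.I_re, Complex.I_im]
        nlinarith
    have hnorm : ∀ r : ℂ, r = r₁ ∨ r = r₂ → ‖r‖ < 1 := by
      intro r hr
      refine lt_of_pow_lt_pow_left₀ 2 (by norm_num) ?_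
      have hsq := Complex.sq_norm r
      rw [hsq, hnsq r hr]
      nlinarith
    have hsum : r₁ + r₂ = -(c : ℂ) := by rw [hr₁, hr₂]; push_cast; ring
    have hprod : r₁ * r₂ = (d : ℂ) := by
      rw [hr₁, hr₂]
      have : (d : ℂ) = ((c ^ 2 / 4 + e ^ 2 : ℝ) : ℂ) := by
        norm_cast; linarith
      rw [this]; push_cast
      have hI : Complex.I ^ 2 = -1 := Complex.I_sq
      linear_combination (-(e : ℂ) ^ 2) * hI
    exact main_aux c d r₁ r₂ (hnorm r₁ (Or.inl rfl)) (hnorm r₂ (Or.inr rfl)) hsum hprod z hz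
end

section
/- Let x ∈ (-1, 0] and a ∈ [0, 1). Then P(a,x) := 2 + 4ax + 4a + x - 2a^2x^2 - 5a^2x - 2a^2 - 2ax^2 > 0. -/
-- `P(a, -1) = (1 - a) ^ 2`, so `1 + x` divides `P(a, x) - (1 - a) ^ 2`.
theorem P_eq_mul_add_sq (a x : ℝ) :
    2 + 4 * a * x + 4 * a + x - 2 * a ^ 2 * x ^ 2 - 5 * a ^ 2 * x - 2 * a ^ 2 - 2 * a * x ^ 2 =
      (1 + x) * (1 + 6 * a - 3 * a ^ 2 - 2 * a * (a + 1) * x) + (1 - a) ^ 2 := by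
  ring

theorem cofactor_pos {a x : ℝ} (ha₀ : 0 ≤ a) (ha₁ : a ≤ 1) (hx : x ≤ 0) :
    0 < 1 + 6 * a - 3 * a ^ 2 - 2 * a * (a + 1) * x := by
  have hsq : a ^ 2 ≤ a := by nlinarith
  have hlin : 2 * a * (a + 1) * x ≤ 0 :=
    mul_nonpos_of_nonneg_of_nonpos (by positivity) hx
  linarith

/-- For `x ∈ (-1, 0]` and `a ∈ [0, 1)`:
`P(a,x) = 2 + 4ax + 4a + x - 2a²x² - 5a²x - 2a² - 2ax² > 0`. -/
theorem P_positive (x a : ℝ) (hx₁ : -1 < x) (hx₂ : x ≤ 0) (ha₁ : 0 ≤ a) (ha₂ : a < 1) :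
    2 + 4 * a * x + 4 * a + x - 2 * a ^ 2 * x ^ 2 - 5 * a ^ 2 * x - 2 * a ^ 2
      - 2 * a * x ^ 2 > 0 := by
  rw [gt_iff_lt, P_eq_mul_add_sq]
  have hprod := mul_pos (by linarith : 0 < 1 + x) (cofactor_pos ha₁ ha₂.le hx₂)
  exact add_pos_of_pos_of_nonneg hprod (sq_nonneg _)
end

section
/- Let α ∈ [π/2, π) and a ∈ [0, 1), and set x = cos α. Then all three roots of the cubic polynomial f(z) = z^3 + (1/2 + (3/2)a + x)z^2 + (a + 2ax)z + (ax + (1/2)a - 1/2) lie in the open unit disk. -/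
/-!
Write the cubic as `t³ + b t² + c t + d` with real coefficients. A real root is excluded from
`|t| ≥ 1` by the signs of the cubic there. A non-real root `z` comes with its conjugate, so by
Vieta the third root `w` is real and `|z|² w = -d`; if `|z| ≥ 1`, then `w` lies between `0` and
`-d`. Here `-d = (1 - a - 2ax)/2 > 0`, and the cubic is negative on `[0, -d]`.
-/

theorem Complex.exists_real_root_normSq_mul_of_cubic (b c d : ℝ) (z : ℂ)
    (hz : z ^ 3 + b * z ^ 2 + c * z + d = 0) (him : z.im ≠ 0) :
    ∃ w : ℝ, w ^ 3 + b * w ^ 2 + c * w + d = 0 ∧ Complex.normSq z * w = -d := by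
  obtain ⟨p, q⟩ := z
  have hre := congrArg Complex.re hz
  have hzim := congrArg Complex.im hz
  simp [pow_succ] at hre hzim him
  have hq : 3 * p ^ 2 - q ^ 2 + 2 * b * p + c = 0 := by
    apply mul_left_cancel₀ him
    linear_combination hzim
  refine ⟨-b - 2 * p, ?_, ?_⟩
  · linear_combination hre - (3 * p + b) * hq
  · rw [Complex.normSq_mk]
    linear_combination hre - p * hq

theorem Complex.norm_lt_one_of_cubic_root (b c d : ℝ)
    (h_large : ∀ t : ℝ, 1 ≤ |t| → t ^ 3 + b * t ^ 2 + c * t + d ≠ 0)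
    (h_between : ∀ t ∈ Set.uIcc 0 (-d), t ^ 3 + b * t ^ 2 + c * t + d ≠ 0)
    (z : ℂ) (hz : z ^ 3 + b * z ^ 2 + c * z + d = 0) : ‖z‖ < 1 := by
  by_contra! hnorm
  by_cases him : z.im = 0
  · have hz_real : (z.re : ℂ) = z := Complex.ext rfl him.symm
    refine h_large z.re ?_ (by exact_mod_cast hz_real ▸ hz)
    rwa [← Real.norm_eq_abs, ← Complex.norm_real, hz_real]
  · obtain ⟨w, hw, hnw⟩ := Complex.exists_real_root_normSq_mul_of_cubic b c d z hz him
    have hn : 1 ≤ Complex.normSq z := by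
      rw [Complex.normSq_eq_norm_sq]
      nlinarith
    refine h_between w ?_ hw
    rw [Set.mem_uIcc]
    rcases le_total 0 w with hw₀ | hw₀
    · exact Or.inl ⟨hw₀, by nlinarith⟩
    · exact Or.inr ⟨by nlinarith, hw₀⟩

section

variable {a x t : ℝ}

theorem cubic_pos_of_one_le (ha : 0 ≤ a) (hx : -1 < x) (ht : 1 ≤ t) :
    0 < t ^ 3 + (1 / 2 + 3 / 2 * a + x) * t ^ 2 + (a + 2 * a * x) * t
      + (a * x + a / 2 - 1 / 2) := by
  have hs : 0 ≤ t - 1 := sub_nonneg.2 ht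
  have hx' : 0 ≤ x + 1 := by linarith
  nlinarith [mul_nonneg hs hs, mul_nonneg ha hs, mul_nonneg (mul_nonneg hs hs) hs,
    mul_pos (show 0 < x + 1 by linarith) (show 0 < 1 + 3 * a by linarith),
    mul_nonneg (mul_nonneg ha hs) hx', mul_nonneg hs hx', mul_nonneg (mul_nonneg hs hs) hx']

theorem cubic_neg_of_le_neg_one (ha : a < 1) (hx : x ≤ 0) (ht : t ≤ -1) :
    t ^ 3 + (1 / 2 + 3 / 2 * a + x) * t ^ 2 + (a + 2 * a * x) * t
      + (a * x + a / 2 - 1 / 2) < 0 := by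
  have hs : 0 ≤ -1 - t := by linarith
  have ha' : 0 ≤ 1 - a := by linarith
  have hx' : 0 ≤ -x := by linarith
  nlinarith [mul_nonneg hs hs, mul_nonneg (mul_nonneg hs hs) hs,
    mul_pos (show 0 < 1 - a by linarith) (show 0 < 1 - x by linarith),
    mul_nonneg (mul_nonneg hs hs) ha', mul_nonneg hs ha', mul_nonneg (mul_nonneg hs ha') hx',
    mul_nonneg (mul_nonneg hs hs) hx', mul_nonneg hs hx']

theorem cubic_neg_of_mem_Icc (ha₁ : 0 ≤ a) (ha₂ : a < 1) (hx : x ≤ 0)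
    (ht : t ∈ Set.Icc 0 (-(a * x + a / 2 - 1 / 2))) :
    t ^ 3 + (1 / 2 + 3 / 2 * a + x) * t ^ 2 + (a + 2 * a * x) * t
      + (a * x + a / 2 - 1 / 2) < 0 := by
  obtain ⟨ht₀, ht⟩ := ht
  have hd : a * x + a / 2 - 1 / 2 < 0 := by nlinarith
  -- writing the cubic as `t q(t) + d`, it suffices that `q(t) ≤ 0` or `q(t) < 1`
  rcases le_or_gt (t ^ 2 + (1 / 2 + 3 / 2 * a + x) * t + (a + 2 * a * x)) 0 with hq | hq
  · nlinarith [mul_nonpos_of_nonneg_of_nonpos ht₀ hq]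
  · have ha' : 0 ≤ 1 - a := by linarith
    have hx' : 0 ≤ 1 - x := by linarith
    have hq_lt_one : t ^ 2 + (1 / 2 + 3 / 2 * a + x) * t + (a + 2 * a * x) < 1 := by
      nlinarith [mul_nonneg ht₀ (sub_nonneg.2 ht), mul_pos (by linarith : 0 < 1 - a)
        (by linarith : 0 < 1 - x), mul_nonneg ht₀ ha', mul_nonneg ht₀ hx',
        mul_nonneg (mul_nonneg ht₀ ha') hx']
    nlinarith [mul_le_mul_of_nonneg_left hq_lt_one.le ht₀]

end

/-- For `α ∈ [π/2, π)`, `a ∈ [0,1)` and `x = cos α`, all three roots of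
`z³ + (1/2 + (3/2)a + x)z² + (a + 2ax)z + (ax + (1/2)a - 1/2)` lie in the open unit disk. -/
theorem cubic_roots_in_open_disk (α a : ℝ) (hα₁ : Real.pi / 2 ≤ α) (hα₂ : α < Real.pi)
    (ha₁ : 0 ≤ a) (ha₂ : a < 1) (z : ℂ)
    (hz : z ^ 3 + ((1 / 2 : ℂ) + (3 / 2) * (a : ℂ) + (Real.cos α : ℂ)) * z ^ 2
        + ((a : ℂ) + 2 * (a : ℂ) * (Real.cos α : ℂ)) * z
        + ((a : ℂ) * (Real.cos α : ℂ) + (1 / 2) * (a : ℂ) - 1 / 2) = 0) :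
    ‖z‖ < 1 := by
  set x := Real.cos α
  have hx₀ : x ≤ 0 := Real.cos_nonpos_of_pi_div_two_le_of_le hα₁ (by linarith [Real.pi_pos])
  have hx₁ : -1 < x := by
    simpa using Real.cos_lt_cos_of_nonneg_of_le_pi (by linarith [Real.pi_pos]) le_rfl hα₂
  have hd : 0 ≤ -(a * x + a / 2 - 1 / 2) := by nlinarith
  refine Complex.norm_lt_one_of_cubic_root (1 / 2 + 3 / 2 * a + x) (a + 2 * a * x)
    (a * x + a / 2 - 1 / 2) (fun t ht => ?_) (fun t ht => ?_) z (by push_cast; linear_combination hz)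
  · rcases le_abs'.1 ht with ht | ht
    · exact (cubic_neg_of_le_neg_one ha₂ hx₀ ht).ne
    · exact (cubic_pos_of_one_le ha₁ hx₁ ht).ne'
  · rw [Set.uIcc_of_le hd] at ht
    exact (cubic_neg_of_mem_Icc ha₁ ha₂ hx₀ ht).ne
end

section
/- Let ω(z) = e^{iθ}z^2 and α ∈ [π/2, π). Define ω̃(z) = -z·(ω(z)^2 + [ω(z) - (1/2)ω'(z)z] - (1/2)ω'(z)·(1 + z cos α)/(cos α + z)) / (-(1 + z cos α)/(cos α + z) - [ω(z) - (1/2)ω'(z)z]·(1 + z cos α)/(cos α + z) + (1/2)ω'(z)z^2). Then ω̃(z) = -e^{iθ}z^2 wherever defined, and in particular |ω̃(z)| < 1 for all z in the open unit disk. -/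
/-! For `ω = e^{iθ} z²` Euler's relation `ω'(z) z = 2 ω(z)` kills the bracket `ω - ½ ω' z`, after
which the numerator of `ω̃` is `e^{iθ} z` times its denominator. Hence `ω̃ = -e^{iθ} z²`, whose modulus
`|z|²` is below `1` on the disk; where the denominator vanishes, `ω̃` is `0` by the convention
`x / 0 = 0`. -/

theorem strip_dilatation_num_eq {K : Type*} [Field K] [CharZero K] (e z q : K) :
    (e * z ^ 2) ^ 2 + (e * z ^ 2 - 1 / 2 * (2 * e * z) * z) - 1 / 2 * (2 * e * z) * q =
      e * z * (-q - (e * z ^ 2 - 1 / 2 * (2 * e * z) * z) * q + 1 / 2 * (2 * e * z) * z ^ 2) := by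
  ring

theorem norm_exp_ofReal_mul_I_mul_sq_lt_one (θ : ℝ) {z : ℂ} (hz : ‖z‖ < 1) :
    ‖-Complex.exp (θ * Complex.I) * z ^ 2‖ < 1 := by
  rw [norm_mul, norm_neg, Complex.norm_exp_ofReal_mul_I, one_mul, norm_pow]
  exact pow_lt_one₀ (norm_nonneg z) hz two_ne_zero

theorem dilatation_strip_general (θ α : ℝ)
    (z : ℂ) (hz : ‖z‖ < 1) :
    let e := Complex.exp ((θ : ℂ) * Complex.I)
    let w := e * z ^ 2
    let w' := 2 * e * z
    let q := (1 + z * (Real.cos α : ℂ)) / ((Real.cos α : ℂ) + z)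
    let num := w ^ 2 + (w - (1 / 2) * w' * z) - (1 / 2) * w' * q
    let den := -q - (w - (1 / 2) * w' * z) * q + (1 / 2) * w' * z ^ 2
    (den ≠ 0 → -z * num / den = -e * z ^ 2) ∧ ‖-z * num / den‖ < 1 := by
  intro e w w' q num den
  have hnum : num = e * z * den := strip_dilatation_num_eq e z q
  have hval : den ≠ 0 → -z * num / den = -e * z ^ 2 := fun hden => by
    rw [hnum]
    field_simp
  refine ⟨hval, ?_⟩
  rcases eq_or_ne den 0 with hden | hden
  · simp [hden]
  · rw [hval hden]
    exact norm_exp_ofReal_mul_I_mul_sq_lt_one θ hz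

/-- For `ω(z) = e^{iθ}z²` (so `ω'(z) = 2e^{iθ}z`) and `α ∈ [π/2, π)`, the dilatation
`ω̃(z) = -z(ω² + (ω - (1/2)ω'z) - (1/2)ω'·q)/(-q - (ω - (1/2)ω'z)·q + (1/2)ω'z²)` with
`q = (1 + z cos α)/(cos α + z)` equals `-e^{iθ}z²` wherever defined; in particular
`|ω̃(z)| < 1` on the open unit disk. -/
theorem dilatation_strip (θ α : ℝ) (hα₁ : Real.pi / 2 ≤ α) (hα₂ : α < Real.pi)
    (z : ℂ) (hz : ‖z‖ < 1) :
    let e := Complex.exp ((θ : ℂ) * Complex.I)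
    let w := e * z ^ 2
    let w' := 2 * e * z
    let q := (1 + z * (Real.cos α : ℂ)) / ((Real.cos α : ℂ) + z)
    let num := w ^ 2 + (w - (1 / 2) * w' * z) - (1 / 2) * w' * q
    let den := -q - (w - (1 / 2) * w' * z) * q + (1 / 2) * w' * z ^ 2
    (den ≠ 0 → -z * num / den = -e * z ^ 2) ∧ ‖-z * num / den‖ < 1 :=
  dilatation_strip_general θ α z hz
end
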